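/- Let (E, ℋ) be a Steiner system of type (3,6,22) and let M be its associated matroid of rank 4, whose bases are the 4-element subsets of E contained in no block. Then P_M(t) = 1 + 55t. -/

import Mathlib

/-!
Contracting a set `S` of a matroid `N` leaves a loopless matroid exactly when `S` is a flat, and
`P_N(0)` is `1` or `0` according as `N` is loopless or not. Hence in the coefficient of `t^j` of
`Z_N = Σ_S t^{rk S} P_{N/S}` the sets of rank `j` contribute the number `W_j` of rank-`j` flats,
and the sets of smaller rank contribute higher coefficients of the `P_{N/S}`. For `j = rk N - 1`
the degree bound kills all of the latter, and for `j = 1` and `N` loopless only `S = ∅` survives.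
Palindromicity of `Z_N` then gives `[t] P_N = W_{r-1} - W_1`, which determines `P_N` when
`rk N ≤ 4`.

In the matroid of a Steiner system `S(d, k, n)` every `d`-set is independent, so the rank-one
flats are the `n` points, while the hyperplanes are exactly the blocks, of which there are
`C(n, d) / C(k, d)` by double counting. For `S(3, 6, 22)` this gives `77 - 22 = 55`.
-/

open Polynomial Matroid

namespace KLPaper

variable {α : Type} [Fintype α]

/-- The contraction `M ⧸ C` of a set `C` in a matroid `M`, defined (as is standard,
see e.g. Oxley, Prop. 3.1.1) as the dual of the deletion of `C` from the dual matroid,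
where deletion of `C` is restriction to `M.E \ C`.  Its ground set is `M.E \ C`. -/
noncomputable def contract (M : Matroid α) (C : Set α) : Matroid α :=
  (M✶ ↾ (M.E \ C))✶

scoped infixl:75 " ⧸ " => KLPaper.contract

/-- The rank `rk M S` of a set `S` in a matroid `M`: the largest cardinality of an
independent subset of `S`. -/
noncomputable def rk (M : Matroid α) (S : Set α) : ℕ :=
  sSup {n | ∃ I, I ⊆ S ∧ M.Indep I ∧ I.ncard = n}

/-- The rank of a matroid: the rank of its ground set. -/
noncomputable def rank (M : Matroid α) : ℕ := rk M M.E

/-- A circuit of a matroid: a minimal dependent set, i.e. a dependent subset of the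
ground set all of whose proper subsets are independent. -/
def IsCircuit (M : Matroid α) (C : Set α) : Prop :=
  M.Dep C ∧ ∀ D ⊂ C, M.Indep D

/-- A hyperplane of a matroid: a maximal proper flat. -/
def IsHyperplane (M : Matroid α) (H : Set α) : Prop :=
  M.IsFlat H ∧ H ≠ M.E ∧ ∀ F, M.IsFlat F → H ⊂ F → F = M.E

/-- A stressed hyperplane of a matroid `M` of rank `k`: a hyperplane `H` such that every
`k`-element subset of `H` is a circuit of `M`. -/
def Stressed (M : Matroid α) (H : Set α) : Prop :=
  IsHyperplane M H ∧ ∀ C ⊆ H, C.ncard = rank M → IsCircuit M C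

/-- `Mt` is the relaxation of `M` at the stressed hyperplane `H`: the matroid on the same
ground set whose bases are exactly the bases of `M` together with all `(rank M)`-element
subsets of `H`. -/
def IsRelaxation (M Mt : Matroid α) (H : Set α) : Prop :=
  Mt.E = M.E ∧ ∀ B : Set α, Mt.IsBase B ↔ (M.IsBase B ∨ (B ⊆ H ∧ B.ncard = rank M))

/-- The characterization of the Kazhdan–Lusztig polynomials `P_M` and the `Z`-polynomials
`Z_M` of matroids (on a fixed finite type): (i) both equal `1` on matroids with empty
ground set; (ii) `2 · deg P_M < rk M` when the ground set is nonempty (the zero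
polynomial being allowed); (iii) `Z_M` is palindromic of degree `rk M`;
(iv) `Z_M = Σ_{S ⊆ E} t^{rk S} · P_{M ⧸ S}`, the sum over all subsets `S` of `E`. -/
def PZaxioms (P Z : Matroid α → Polynomial ℤ) : Prop :=
  (∀ M : Matroid α, M.E = ∅ → P M = 1 ∧ Z M = 1) ∧
  (∀ M : Matroid α, M.E ≠ ∅ → (P M = 0 ∨ 2 * (P M).natDegree < rank M)) ∧
  (∀ M : Matroid α, (Z M).natDegree ≤ rank M ∧
      ∀ i ≤ rank M, (Z M).coeff i = (Z M).coeff (rank M - i)) ∧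
  (∀ M : Matroid α,
      Z M = ∑ S ∈ M.E.toFinite.toFinset.powerset,
        X ^ (rk M (S : Set α)) * P (M ⧸ (S : Set α)))

end KLPaper

-- Reopening the namespace drops the instance variable `[Fintype α]` of the definitions above.
namespace KLPaper

open Set

section Rank

variable {α : Type} {M : Matroid α} {C I S X : Set α}

lemma contract_eq_matroid_contract (M : Matroid α) (C : Set α) : (M ⧸ C) = M.contract C := rfl

lemma loops_contract_eq_empty_iff (hC : C ⊆ M.E) : (M ⧸ C).loops = ∅ ↔ M.IsFlat C := by
  rw [contract_eq_matroid_contract, contract_loops_eq, sdiff_eq_empty, isFlat_iff_closure_eq]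
  exact ⟨fun h ↦ h.antisymm (M.subset_closure C), fun h ↦ h.le⟩

lemma loops_contract_of_subset_loops (hC : C ⊆ M.loops) : (M ⧸ C).loops = M.loops \ C := by
  rw [contract_eq_matroid_contract, contract_loops_eq, closure_eq_loops_of_subset hC]

lemma isFlat_of_isBasis (hI : M.IsBasis I S) (h : ∀ x ∈ M.E \ S, M.Indep (insert x I)) :
    M.IsFlat S := by
  rw [isFlat_iff_closure_eq, ← hI.closure_eq_closure]
  refine Subset.antisymm (fun x hx ↦ ?_) hI.subset_closure
  by_contra hxS
  have hxI : x ∉ I := fun h ↦ hxS (hI.subset h)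
  have hxE := M.closure_subset_ground I hx
  exact (hI.indep.notMem_closure_iff_of_notMem hxI).2 (h x ⟨hxE, hxS⟩) hx

variable [Finite α]

lemma rk_eq_ncard_of_isBasis' (hI : M.IsBasis' I S) : rk M S = I.ncard := by
  refine IsGreatest.csSup_eq ⟨⟨I, hI.subset, hI.indep, rfl⟩, ?_⟩
  rintro _ ⟨J, hJS, hJ, rfl⟩
  have := (hJ.encard_le_eRk_of_subset hJS).trans hI.encard_eq_eRk.ge
  rwa [← (toFinite J).cast_ncard_eq, ← (toFinite I).cast_ncard_eq, Nat.cast_le] at this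

lemma rk_eq_ncard_of_indep (hI : M.Indep I) : rk M I = I.ncard :=
  rk_eq_ncard_of_isBasis' hI.isBasis_self.isBasis'

lemma ncard_le_rk (hI : M.Indep I) (hIS : I ⊆ S) : I.ncard ≤ rk M S := by
  obtain ⟨J, hJ, hIJ⟩ := hI.subset_isBasis'_of_subset hIS
  exact (rk_eq_ncard_of_isBasis' hJ).symm ▸ ncard_le_ncard hIJ

lemma rk_empty (M : Matroid α) : rk M ∅ = 0 := by
  simpa using rk_eq_ncard_of_indep M.empty_indep

lemma rank_eq_ncard_of_isBase {B : Set α} (hB : M.IsBase B) : rank M = B.ncard :=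
  rk_eq_ncard_of_isBasis' hB.isBasis_ground.isBasis'

lemma rk_contract_add_rk (hCX : C ⊆ X) : rk (M ⧸ C) (X \ C) + rk M C = rk M X := by
  obtain ⟨J, hJ⟩ := M.exists_isBasis' C
  obtain ⟨K, hK, hJK⟩ := hJ.indep.subset_isBasis'_of_subset (hJ.subset.trans hCX)
  have hKC : K ∩ C = J :=
    (hJ.eq_of_subset_indep (hK.indep.subset inter_subset_left) (subset_inter hJK hJ.subset)
      inter_subset_right).symm
  have hcontr : (M ⧸ C).IsBasis' (K \ C) (X \ C) :=
    hK.contract_isBasis' hJ (hK.indep.subset (union_subset sdiff_subset hJK))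
  rw [rk_eq_ncard_of_isBasis' hcontr, rk_eq_ncard_of_isBasis' hJ, rk_eq_ncard_of_isBasis' hK,
    ← hKC, add_comm, ncard_inter_add_ncard_sdiff_eq_ncard]

lemma rank_contract_add_rk (hC : C ⊆ M.E) : rank (M ⧸ C) + rk M C = rank M :=
  rk_contract_add_rk hC

lemma rk_eq_zero_iff (hS : S ⊆ M.E) : rk M S = 0 ↔ S ⊆ M.loops := by
  obtain ⟨I, hI⟩ := M.exists_isBasis S
  rw [rk_eq_ncard_of_isBasis' hI.isBasis', ncard_eq_zero]
  exact ⟨fun h ↦ by simpa [h, closure_empty] using hI.subset_closure,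
    fun h ↦ hI.indep.eq_empty_of_subset_loops (hI.subset.trans h)⟩

end Rank

section KazhdanLusztig

variable {α : Type} [Fintype α] {P Z : Matroid α → ℤ[X]} {N : Matroid α} {S : Set α}

lemma mem_powerset_toFinset_ground {S : Finset α} :
    S ∈ N.E.toFinite.toFinset.powerset ↔ (S : Set α) ⊆ N.E := by
  rw [Finset.mem_powerset, ← Finset.coe_subset, Finite.coe_toFinset]

lemma coeff_P_eq_zero (hPZ : PZaxioms P Z) (hN : N.E ≠ ∅) {i : ℕ} (hi : rank N ≤ 2 * i) :
    (P N).coeff i = 0 := by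
  rcases hPZ.2.1 N hN with h | h
  · simp [h]
  · exact coeff_eq_zero_of_natDegree_lt (by omega)

lemma coeff_P_contract_eq_zero (hPZ : PZaxioms P Z) (hS : S ⊂ N.E) {i : ℕ}
    (hi : rank N ≤ rk N S + 2 * i) : (P (N ⧸ S)).coeff i = 0 := by
  have hrank := rank_contract_add_rk hS.subset
  refine coeff_P_eq_zero hPZ ?_ (by omega)
  rw [contract_eq_matroid_contract, contract_ground, Ne, sdiff_eq_empty]
  exact hS.not_subset

lemma coeff_Z (hPZ : PZaxioms P Z) (N : Matroid α) (j : ℕ) :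
    (Z N).coeff j = ∑ S ∈ N.E.toFinite.toFinset.powerset,
      if rk N S ≤ j then (P (N ⧸ S)).coeff (j - rk N S) else 0 := by
  rw [hPZ.2.2.2 N, finsetSum_coeff]
  refine Finset.sum_congr rfl fun S _ ↦ ?_
  rw [mul_comm, coeff_mul_X_pow']

lemma coeff_Z_rank (hPZ : PZaxioms P Z) (N : Matroid α) : (Z N).coeff (rank N) = 1 := by
  rw [coeff_Z hPZ, Finset.sum_eq_single_of_mem _ (Finset.mem_powerset_self _)]
  · have hground : ((N.E.toFinite.toFinset : Finset α) : Set α) = N.E := Finite.coe_toFinset _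
    have hempty : (N ⧸ N.E).E = ∅ := by
      rw [contract_eq_matroid_contract, contract_ground, sdiff_self]
    rw [hground, ← rank, if_pos le_rfl, Nat.sub_self, (hPZ.1 _ hempty).1, coeff_one_zero]
  · intro S hS hSE
    have hSE : (S : Set α) ⊂ N.E := by
      refine (mem_powerset_toFinset_ground.1 hS).ssubset_of_ne fun h ↦ hSE ?_
      rw [← Finset.coe_inj, h, Finite.coe_toFinset]
    have hrank := rank_contract_add_rk hSE.subset
    rw [if_pos (by omega), coeff_P_contract_eq_zero hPZ hSE (by omega)]

lemma coeff_Z_zero (hPZ : PZaxioms P Z) (N : Matroid α) : (Z N).coeff 0 = 1 := by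
  rw [(hPZ.2.2.1 N).2 0 (Nat.zero_le _), Nat.sub_zero, coeff_Z_rank hPZ]

lemma coeff_Z_zero_eq_sum_loops (hPZ : PZaxioms P Z) (N : Matroid α) :
    (Z N).coeff 0 = ∑ S ∈ N.loops.toFinite.toFinset.powerset, (P (N ⧸ S)).coeff 0 := by
  classical
  rw [coeff_Z hPZ, ← Finset.sum_filter]
  refine Finset.sum_congr ?_ fun S _ ↦ by rw [Nat.zero_sub]
  ext S
  rw [Finset.mem_filter, mem_powerset_toFinset_ground, Finset.mem_powerset, ← Finset.coe_subset,
    Finite.coe_toFinset, Nat.le_zero]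
  refine ⟨fun h ↦ (rk_eq_zero_iff h.1).1 h.2, fun h ↦ ?_⟩
  have hSE := h.trans N.loops_subset_ground
  exact ⟨hSE, (rk_eq_zero_iff hSE).2 h⟩

theorem coeff_P_zero (hPZ : PZaxioms P Z) (N : Matroid α) :
    (P N).coeff 0 = if N.loops = ∅ then 1 else 0 := by
  induction hn : N.loops.ncard using Nat.strong_induction_on generalizing N with
  | _ n ih =>
  -- `N ⧸ S` has loops `N.loops \ S`, so by induction only `S = ∅` and `S = N.loops` contribute
  -- to `Z_N(0) = Σ_{S ⊆ loops} P_{N/S}(0) = 1`.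
  classical
  set L := N.loops.toFinite.toFinset
  have hLcoe : (L : Set α) = N.loops := Finite.coe_toFinset _
  have hterm : ∀ S ∈ L.powerset.erase ∅, (P (N ⧸ S)).coeff 0 = if S = L then 1 else 0 := by
    intro S hS
    obtain ⟨hSne, hSL⟩ := Finset.mem_erase.1 hS
    rw [Finset.mem_powerset] at hSL
    have hSloops : (S : Set α) ⊆ N.loops := hLcoe ▸ Finset.coe_subset.2 hSL
    have hlt : (N.loops \ S).ncard < n := hn ▸ ncard_lt_ncard (hSloops.sdiff_ssubset_of_nonempty
      (Finset.coe_nonempty.2 (Finset.nonempty_iff_ne_empty.2 hSne)))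
    rw [ih _ hlt _ (by rw [loops_contract_of_subset_loops hSloops])]
    congr 1
    rw [eq_iff_iff, loops_contract_of_subset_loops hSloops, sdiff_eq_empty, ← hLcoe,
      Finset.coe_subset]
    exact ⟨fun h ↦ hSL.antisymm h, fun h ↦ h.ge⟩
  have key := coeff_Z_zero_eq_sum_loops hPZ N
  rw [coeff_Z_zero hPZ, ← Finset.add_sum_erase _ _ (Finset.empty_mem_powerset L),
    Finset.sum_congr rfl hterm, Finset.sum_ite_eq', Finset.coe_empty, contract_eq_matroid_contract,
    contract_empty] at key
  have hLempty : L = ∅ ↔ N.loops = ∅ := by rw [← Finset.coe_inj, hLcoe, Finset.coe_empty]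
  by_cases h : N.loops = ∅
  · rw [if_neg fun hL ↦ Finset.ne_of_mem_erase hL (hLempty.2 h)] at key
    rw [if_pos h]; linarith
  · rw [if_pos (Finset.mem_erase.2 ⟨mt hLempty.1 h, Finset.mem_powerset_self L⟩)] at key
    rw [if_neg h]; linarith

open Classical in
lemma coeff_P_contract_zero (hPZ : PZaxioms P Z) (hS : S ⊆ N.E) :
    (P (N ⧸ S)).coeff 0 = if N.IsFlat S then 1 else 0 := by
  simp only [coeff_P_zero hPZ, loops_contract_eq_empty_iff hS]

open Classical in
noncomputable def flatsOfRank (N : Matroid α) (j : ℕ) : Finset (Finset α) :=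
  {S ∈ N.E.toFinite.toFinset.powerset | rk N S = j ∧ N.IsFlat S}

lemma coeff_Z_rank_sub_one (hPZ : PZaxioms P Z) (N : Matroid α) :
    (Z N).coeff (rank N - 1) = (flatsOfRank N (rank N - 1)).card := by
  classical
  rw [coeff_Z hPZ, flatsOfRank, Finset.card_filter, Nat.cast_sum]
  refine Finset.sum_congr rfl fun S hS ↦ ?_
  have hSE := mem_powerset_toFinset_ground.1 hS
  have hrank := rank_contract_add_rk hSE
  rcases lt_trichotomy (rk N S) (rank N - 1) with hlt | heq | hgt
  · have hSE' : (S : Set α) ⊂ N.E :=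
      hSE.ssubset_of_ne fun h ↦ by rw [h, ← rank] at hlt; omega
    rw [if_pos hlt.le, coeff_P_contract_eq_zero hPZ hSE' (by omega), if_neg (by omega)]
    simp
  · rw [if_pos heq.le, heq, Nat.sub_self, coeff_P_contract_zero hPZ hSE]
    simp
  · rw [if_neg (by omega), if_neg (by omega)]
    simp

lemma coeff_Z_one (hPZ : PZaxioms P Z) (hN : N.loops = ∅) :
    (Z N).coeff 1 = (P N).coeff 1 + (flatsOfRank N 1).card := by
  classical
  have hterm : ∀ S ∈ N.E.toFinite.toFinset.powerset,
      (if rk N S ≤ 1 then (P (N ⧸ S)).coeff (1 - rk N S) else 0) =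
        (if S = ∅ then (P N).coeff 1 else 0) + if rk N S = 1 ∧ N.IsFlat S then 1 else 0 := by
    intro S hS
    have hSE := mem_powerset_toFinset_ground.1 hS
    rcases Nat.lt_trichotomy (rk N S) 1 with h0 | h1 | h2
    · have hS0 : S = ∅ := by
        rw [← Finset.coe_eq_empty, ← subset_empty_iff, ← hN, ← rk_eq_zero_iff hSE]; omega
      subst hS0
      simp [contract_eq_matroid_contract, rk_empty]
    · have hS0 : S ≠ ∅ := by rintro rfl; simp [rk_empty] at h1
      rw [if_pos h1.le, h1, Nat.sub_self, coeff_P_contract_zero hPZ hSE, if_neg hS0]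
      simp
    · have hS0 : S ≠ ∅ := by rintro rfl; simp [rk_empty] at h2
      rw [if_neg (by omega), if_neg hS0, if_neg (by omega)]
      simp
  rw [coeff_Z hPZ, Finset.sum_congr rfl hterm, Finset.sum_add_distrib, Finset.sum_ite_eq',
    if_pos (Finset.empty_mem_powerset _), flatsOfRank, Finset.card_filter, Nat.cast_sum]
  simp

lemma coeff_P_one (hPZ : PZaxioms P Z) (hN : N.loops = ∅) (hr : 2 ≤ rank N) :
    (P N).coeff 1 = (flatsOfRank N (rank N - 1)).card - (flatsOfRank N 1).card := by
  have hpal := (hPZ.2.2.1 N).2 1 (by omega)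
  rw [coeff_Z_one hPZ hN, coeff_Z_rank_sub_one hPZ] at hpal
  omega

theorem P_eq_of_rank_le_four (hPZ : PZaxioms P Z) (hN : N.loops = ∅) (hr2 : 2 ≤ rank N)
    (hr4 : rank N ≤ 4) : P N =
      1 + C ((flatsOfRank N (rank N - 1)).card - (flatsOfRank N 1).card : ℤ) * X := by
  have hdeg : (P N).natDegree ≤ 1 := by
    rcases hPZ.2.1 N fun h ↦ by simp [rank, h, rk_empty] at hr2 with h | h
    · simp [h]
    · omega
  rw [eq_X_add_C_of_natDegree_le_one hdeg, coeff_P_one hPZ hN hr2, coeff_P_zero hPZ, if_pos hN,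
    map_one, add_comm]

end KazhdanLusztig

section Steiner

variable {β : Type}

structure IsSteinerSystem (d k : ℕ) (E : Set β) (Blocks : Set (Set β)) : Prop where
  subset_of_mem : ∀ Bl ∈ Blocks, Bl ⊆ E
  ncard_of_mem : ∀ Bl ∈ Blocks, Bl.ncard = k
  existsUnique : ∀ D ⊆ E, D.ncard = d → ∃! Bl, Bl ∈ Blocks ∧ D ⊆ Bl

def IsSteinerMatroid (M : Matroid β) (d : ℕ) (Blocks : Set (Set β)) : Prop :=
  ∀ B, M.IsBase B ↔ B ⊆ M.E ∧ B.ncard = d + 1 ∧ ∀ Bl ∈ Blocks, ¬B ⊆ Bl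

variable {d k : ℕ} {E : Set β} {Blocks : Set (Set β)}

lemma IsSteinerSystem.ncard_mul_choose [Finite β] (hS : IsSteinerSystem d k E Blocks) :
    Blocks.ncard * k.choose d = E.ncard.choose d := by
  classical
  set r := fun (D : Finset β) (Bl : Set β) ↦ (D : Set β) ⊆ Bl
  have hcount := Finset.card_mul_eq_card_mul (s := E.toFinite.toFinset.powersetCard d)
    (t := Blocks.toFinite.toFinset) r (m := 1) (n := k.choose d) ?_ ?_
  · rwa [Finset.card_powersetCard, ← ncard_eq_toFinset_card, ← ncard_eq_toFinset_card, mul_one,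
      eq_comm] at hcount
  · intro D hD
    rw [Finset.mem_powersetCard, ← Finset.coe_subset, Finite.coe_toFinset] at hD
    obtain ⟨Bl, hBl, huniq⟩ := hS.existsUnique D hD.1 (by rw [ncard_coe_finset, hD.2])
    rw [Finset.card_eq_one]
    refine ⟨Bl, Finset.eq_singleton_iff_unique_mem.2 ⟨?_, fun Bl' hBl' ↦ ?_⟩⟩
    · simpa [Finset.mem_bipartiteAbove] using hBl
    · exact huniq Bl' (by simpa [Finset.mem_bipartiteAbove] using hBl')
  · intro Bl hBl
    rw [Finite.mem_toFinset] at hBl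
    have hbelow : (E.toFinite.toFinset.powersetCard d).bipartiteBelow r Bl =
        Bl.toFinite.toFinset.powersetCard d := by
      ext D
      simp only [r, Finset.mem_bipartiteBelow, Finset.mem_powersetCard, ← Finset.coe_subset,
        Finite.coe_toFinset]
      exact ⟨fun h ↦ ⟨h.2, h.1.2⟩,
        fun h ↦ ⟨⟨h.1.trans (hS.subset_of_mem Bl hBl), h.2⟩, h.1⟩⟩
    rw [hbelow, Finset.card_powersetCard, ← ncard_eq_toFinset_card, hS.ncard_of_mem Bl hBl]

namespace IsSteinerMatroid

variable {M : Matroid β} {D I S Bl : Set β} {x : β}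

lemma exists_mem_notMem (hM : IsSteinerMatroid M d Blocks) (hBl : Bl ∈ Blocks) :
    ∃ x ∈ M.E, x ∉ Bl := by
  obtain ⟨B, hB⟩ := M.exists_isBase
  obtain ⟨hBE, -, hBBl⟩ := (hM B).1 hB
  obtain ⟨x, hxB, hxBl⟩ := not_subset.1 (hBBl Bl hBl)
  exact ⟨x, hBE hxB, hxBl⟩

section Finite

variable [Finite β]

lemma isBase_insert (hM : IsSteinerMatroid M d Blocks) (hS : IsSteinerSystem d k M.E Blocks)
    (hD : D ⊆ M.E) (hDd : D.ncard = d) (hBl : Bl ∈ Blocks) (hDBl : D ⊆ Bl) (hx : x ∈ M.E)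
    (hxBl : x ∉ Bl) : M.IsBase (insert x D) := by
  have hxD : x ∉ D := fun h ↦ hxBl (hDBl h)
  refine (hM _).2 ⟨insert_subset hx hD, by rw [ncard_insert_of_notMem hxD, hDd],
    fun Bl' hBl' h ↦ ?_⟩
  have := (hS.existsUnique D hD hDd).unique ⟨hBl', (subset_insert x D).trans h⟩ ⟨hBl, hDBl⟩
  exact hxBl (this ▸ h (mem_insert x D))

lemma indep_of_ncard_eq (hM : IsSteinerMatroid M d Blocks) (hS : IsSteinerSystem d k M.E Blocks)
    (hD : D ⊆ M.E) (hDd : D.ncard = d) : M.Indep D := by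
  obtain ⟨Bl, ⟨hBl, hDBl⟩, -⟩ := hS.existsUnique D hD hDd
  obtain ⟨x, hx, hxBl⟩ := hM.exists_mem_notMem hBl
  exact (hM.isBase_insert hS hD hDd hBl hDBl hx hxBl).indep.subset (subset_insert x D)

lemma lt_ncard_ground (hM : IsSteinerMatroid M d Blocks) : d < M.E.ncard := by
  obtain ⟨B, hB⟩ := M.exists_isBase
  obtain ⟨hBE, hBd, -⟩ := (hM B).1 hB
  have := ncard_le_ncard hBE
  omega

lemma indep_of_ncard_le (hM : IsSteinerMatroid M d Blocks) (hS : IsSteinerSystem d k M.E Blocks)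
    (hI : I ⊆ M.E) (hId : I.ncard ≤ d) : M.Indep I := by
  obtain ⟨D, hID, hDE, hDd⟩ := exists_subsuperset_card_eq hI hId hM.lt_ncard_ground.le
  exact (hM.indep_of_ncard_eq hS hDE hDd).subset hID

lemma rank_eq (hM : IsSteinerMatroid M d Blocks) : rank M = d + 1 := by
  obtain ⟨B, hB⟩ := M.exists_isBase
  rw [rank_eq_ncard_of_isBase hB, ((hM B).1 hB).2.1]

lemma loops_eq_empty (hM : IsSteinerMatroid M d Blocks) (hS : IsSteinerSystem d k M.E Blocks)
    (hd : 1 ≤ d) : M.loops = ∅ := by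
  refine eq_empty_of_forall_notMem fun x hx ↦ ?_
  have hxE := M.loops_subset_ground hx
  have hxi : M.Indep {x} := hM.indep_of_ncard_le hS (singleton_subset_iff.2 hxE) (by simpa)
  exact (indep_singleton.1 hxi).not_isLoop hx

lemma ncard_le_of_indep_of_subset (hM : IsSteinerMatroid M d Blocks) (hI : M.Indep I)
    (hBl : Bl ∈ Blocks) (hIBl : I ⊆ Bl) : I.ncard ≤ d := by
  obtain ⟨B, hB, hIB⟩ := hI.exists_isBase_superset
  obtain ⟨-, hBd, hBBl⟩ := (hM B).1 hB
  have hIB' := ncard_le_ncard hIB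
  by_contra! hId
  exact hBBl Bl hBl (eq_of_subset_of_ncard_le hIB (by omega) ▸ hIBl)

lemma isFlat_iff_mem (hM : IsSteinerMatroid M d Blocks) (hS : IsSteinerSystem d k M.E Blocks)
    (hSE : S ⊆ M.E) (hrk : rk M S = d) : M.IsFlat S ↔ S ∈ Blocks := by
  obtain ⟨I, hI⟩ := M.exists_isBasis S
  have hId : I.ncard = d := (rk_eq_ncard_of_isBasis' hI.isBasis').symm.trans hrk
  have hIE := hI.subset.trans hSE
  obtain ⟨Bl, ⟨hBl, hIBl⟩, -⟩ := hS.existsUnique I hIE hId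
  refine ⟨fun hflat ↦ ?_, fun hSBl ↦ isFlat_of_isBasis hI fun x hx ↦
    (hM.isBase_insert hS hIE hId hSBl hI.subset hx.1 hx.2).indep⟩
  have hSBl : S ⊆ Bl := fun x hxS ↦ by
    by_contra hxBl
    have := ncard_le_rk (hM.isBase_insert hS hIE hId hBl hIBl (hSE hxS) hxBl).indep
      (insert_subset hxS hI.subset)
    rw [ncard_insert_of_notMem (fun h ↦ hxBl (hIBl h)), hId] at this
    omega
  have hBlS : Bl ⊆ S := fun y hyBl ↦ by
    rw [← hflat.closure, ← hI.closure_eq_closure, hI.indep.mem_closure_iff]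
    by_cases hyI : y ∈ I
    · exact .inr hyI
    refine .inl ((not_indep_iff (insert_subset (hS.subset_of_mem Bl hBl hyBl) hIE)).1 fun h ↦ ?_)
    have := hM.ncard_le_of_indep_of_subset h hBl (insert_subset hyBl hIBl)
    rw [ncard_insert_of_notMem hyI, hId] at this
    omega
  exact hSBl.antisymm hBlS ▸ hBl

lemma rk_eq_of_mem (hM : IsSteinerMatroid M d Blocks) (hS : IsSteinerSystem d k M.E Blocks)
    (hdk : d ≤ k) (hBl : Bl ∈ Blocks) : rk M Bl = d := by
  obtain ⟨D, hDBl, hDd⟩ := exists_subset_card_eq (hdk.trans (hS.ncard_of_mem Bl hBl).ge)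
  have hD := hM.indep_of_ncard_eq hS (hDBl.trans (hS.subset_of_mem Bl hBl)) hDd
  obtain ⟨I, hI, hDI⟩ := hD.subset_isBasis'_of_subset hDBl
  rw [rk_eq_ncard_of_isBasis' hI]
  have := ncard_le_ncard hDI
  have := hM.ncard_le_of_indep_of_subset hI.indep hBl hI.subset
  omega

lemma rk_eq_one_and_isFlat_iff (hM : IsSteinerMatroid M d Blocks)
    (hS : IsSteinerSystem d k M.E Blocks) (hd : 2 ≤ d) (hSE : S ⊆ M.E) :
    rk M S = 1 ∧ M.IsFlat S ↔ S.ncard = 1 := by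
  refine ⟨fun h ↦ ?_, fun hS1 ↦ ?_⟩
  · obtain ⟨I, hI⟩ := M.exists_isBasis' S
    have hIS := ncard_le_ncard hI.subset
    have := (rk_eq_ncard_of_isBasis' hI).symm.trans h.1
    obtain ⟨T, hTS, hT⟩ := exists_subset_card_eq (min_le_left S.ncard 2)
    have := ncard_le_rk (hM.indep_of_ncard_le hS (hTS.trans hSE) (by omega)) hTS
    omega
  · have hSi := hM.indep_of_ncard_le hS hSE (by omega)
    refine ⟨(rk_eq_ncard_of_indep hSi).trans hS1,
      isFlat_of_isBasis hSi.isBasis_self fun x hx ↦ ?_⟩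
    refine hM.indep_of_ncard_le hS (insert_subset hx.1 hSE) ?_
    rw [ncard_insert_of_notMem hx.2, hS1]
    omega

end Finite

variable [Fintype β]

lemma card_flatsOfRank_eq_ncard (hM : IsSteinerMatroid M d Blocks)
    (hS : IsSteinerSystem d k M.E Blocks) (hdk : d ≤ k) :
    (flatsOfRank M d).card = Blocks.ncard := by
  classical
  have hBlocks : Blocks = (↑) '' (flatsOfRank M d : Set (Finset β)) := by
    ext Bl
    simp only [flatsOfRank, Finset.coe_filter, mem_image, mem_ofPred_eq,
      mem_powerset_toFinset_ground]
    refine ⟨fun hBl ↦ ⟨Bl.toFinite.toFinset, ?_⟩, ?_⟩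
    · have hBlE := hS.subset_of_mem Bl hBl
      have hrk := hM.rk_eq_of_mem hS hdk hBl
      rw [Finite.coe_toFinset]
      exact ⟨⟨hBlE, hrk, (hM.isFlat_iff_mem hS hBlE hrk).2 hBl⟩, rfl⟩
    · rintro ⟨S, ⟨hSE, hrk, hflat⟩, rfl⟩
      exact (hM.isFlat_iff_mem hS hSE hrk).1 hflat
  rw [hBlocks, ncard_image_of_injective _ Finset.coe_injective, ncard_coe_finset]

lemma card_flatsOfRank_one (hM : IsSteinerMatroid M d Blocks)
    (hS : IsSteinerSystem d k M.E Blocks) (hd : 2 ≤ d) : (flatsOfRank M 1).card = M.E.ncard := by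
  classical
  have : flatsOfRank M 1 = M.E.toFinite.toFinset.powersetCard 1 := by
    ext S
    rw [flatsOfRank, Finset.mem_filter, mem_powerset_toFinset_ground, Finset.mem_powersetCard,
      ← Finset.coe_subset, Finite.coe_toFinset, ← ncard_coe_finset]
    exact and_congr_right fun hSE ↦ hM.rk_eq_one_and_isFlat_iff hS hd hSE
  rw [this, Finset.card_powersetCard, Nat.choose_one_right, ncard_eq_toFinset_card]

end IsSteinerMatroid

end Steiner

/-- Let `(E, ℋ)` be a Steiner system of type `(3,6,22)`: `|E| = 22`,
every block `Bl ∈ ℋ` is a `6`-element subset of `E`, and every `3`-element subset of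
`E` is contained in exactly one block.  Let `M` be its associated matroid of rank `4`,
whose bases are the `4`-element subsets of `E` contained in no block.  Then
`P_M(t) = 1 + 55t`. -/
theorem steiner_3_6_22_KL_polynomial {β : Type} [Fintype β]
    (P Z : Matroid β → Polynomial ℤ) (hPZ : PZaxioms P Z)
    (E : Set β) (Blocks : Set (Set β))
    (hEcard : E.ncard = 22)
    (hBlocks : ∀ Bl ∈ Blocks, Bl ⊆ E ∧ Bl.ncard = 6)
    (hSteiner : ∀ D ⊆ E, D.ncard = 3 → ∃! Bl, Bl ∈ Blocks ∧ D ⊆ Bl)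
    (M : Matroid β) (hME : M.E = E)
    (hMB : ∀ B : Set β, M.IsBase B ↔ B ⊆ E ∧ B.ncard = 4 ∧ ∀ Bl ∈ Blocks, ¬B ⊆ Bl) :
    P M = 1 + C 55 * X := by
  subst hME
  have hS : IsSteinerSystem 3 6 M.E Blocks :=
    ⟨fun Bl h ↦ (hBlocks Bl h).1, fun Bl h ↦ (hBlocks Bl h).2, hSteiner⟩
  have hM : IsSteinerMatroid M 3 Blocks := hMB
  have hblocks : Blocks.ncard = 77 := by
    have := hS.ncard_mul_choose
    rw [hEcard, show Nat.choose 6 3 = 20 by rfl, show Nat.choose 22 3 = 1540 by rfl] at this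
    omega
  rw [P_eq_of_rank_le_four hPZ (hM.loops_eq_empty hS (by norm_num)) (by rw [hM.rank_eq]; norm_num)
    (by rw [hM.rank_eq]), hM.rank_eq, hM.card_flatsOfRank_eq_ncard hS (by norm_num),
    hM.card_flatsOfRank_one hS (by norm_num), hblocks, hEcard]
  norm_num

end KLPaper
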